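/- For every integer k ≥ 0, every (2k+1)-strong tournament T is (k+2)*-weakly connected; that is, for every pair of distinct vertices x, y of T there exist k+2 internally disjoint directed paths between x and y (each directed from x to y or from y to x) whose union contains every vertex of T. -/

import Mathlib

variable {V : Type*}

/-- A tournament relation: irreflexive, and between any two distinct vertices
exactly one of the two possible arcs is present. -/
def IsTournament (r : V → V → Prop) : Prop :=
  (∀ v : V, ¬ r v v) ∧ ∀ u v : V, u ≠ v → (r u v ↔ ¬ r v u)

/-- Strong connectivity: every vertex reaches every other by a directed walk. -/
def StronglyConnected (r : V → V → Prop) : Prop :=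
  ∀ u v : V, Relation.ReflTransGen r u v

/-- `k`-strong: at least `k+1` vertices, and deleting any set of fewer than `k`
vertices leaves a strongly connected digraph. -/
def KStrong [Fintype V] (r : V → V → Prop) (k : ℕ) : Prop :=
  k + 1 ≤ Fintype.card V ∧
    ∀ S : Set V, S.ncard < k → ∀ u v : V, u ∉ S → v ∉ S →
      Relation.ReflTransGen (fun a b => a ∉ S ∧ b ∉ S ∧ r a b) u v

/-- A directed path from `u` to `v`, recorded as its (nodup) list of vertices. -/
def IsDipath (r : V → V → Prop) (u v : V) (p : List V) : Prop :=
  p.Chain' r ∧ p.Nodup ∧ p.head? = some u ∧ p.getLast? = some v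

/-- A Hamiltonian directed path from `u` to `v`: a directed path containing
every vertex. -/
def IsHamDipath (r : V → V → Prop) (u v : V) (p : List V) : Prop :=
  IsDipath r u v p ∧ ∀ w : V, w ∈ p

/-- A family of paths between `x` and `y` is internally disjoint if two distinct
paths share no vertex other than `x` and `y`. -/
def InternallyDisjoint (x y : V) {k : ℕ} (ps : Fin k → List V) : Prop :=
  ∀ i j : Fin k, i ≠ j → ∀ w : V, w ∈ ps i → w ∈ ps j → w = x ∨ w = y

/-- A strong `k*`-container between `x` and `y`: `k` internally disjoint directed
paths, all from `x` to `y` or all from `y` to `x`, whose union contains every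
vertex. -/
def StrongStarContainer (r : V → V → Prop) (x y : V) (k : ℕ) : Prop :=
  ∃ ps : Fin k → List V, Function.Injective ps ∧
    ((∀ i, IsDipath r x y (ps i)) ∨ (∀ i, IsDipath r y x (ps i))) ∧
    InternallyDisjoint x y ps ∧ (∀ w : V, ∃ i, w ∈ ps i)

/-- A weak `k*`-container between `x` and `y`: `k` internally disjoint directed
paths, each from `x` to `y` or from `y` to `x`, whose union contains every
vertex. -/
def WeakStarContainer (r : V → V → Prop) (x y : V) (k : ℕ) : Prop :=
  ∃ ps : Fin k → List V, Function.Injective ps ∧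
    (∀ i, IsDipath r x y (ps i) ∨ IsDipath r y x (ps i)) ∧
    InternallyDisjoint x y ps ∧ (∀ w : V, ∃ i, w ∈ ps i)

/-- The irregularity of the digraph is at most `k`:
`|d⁺(x) − d⁻(x)| ≤ k` for every vertex `x`. -/
def IrregularityLE (r : V → V → Prop) (k : ℕ) : Prop :=
  ∀ x : V, ((({y : V | r x y}.ncard : ℤ) - ({y : V | r y x}.ncard : ℤ)).natAbs) ≤ k

/-!
Greedily choose `k` internally disjoint paths between `x` and `y`, each with one or two inner
vertices. While fewer than `k` are chosen, at most `2k` vertices are used, so the rest of `T` is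
still strong and contains a third vertex. There a path `x → v → y` or `y → v → x` exists, or else
every other vertex is dominated by both `x` and `y` or dominates both, and strong connectivity
yields an arc `a → b` from the first kind to the second, hence a path `x → a → b → y`. Deleting the
at most `2k` inner vertices leaves a strong tournament, which has a Hamiltonian cycle by Camion's
theorem; cut at `x` and `y`, it gives the last two paths.

The same dichotomy proves Camion's theorem: a cycle absorbs any outside vertex having both an
in- and an out-neighbour on it, and otherwise an arc from a vertex dominated by the cycle to one
dominating it extends the cycle by two vertices.
-/

open List

section Tournament

variable {W : Type*} {q : W → W → Prop}

namespace IsTournament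

lemma ne_of_rel (hq : IsTournament q) {a b : W} (h : q a b) : a ≠ b := by
  rintro rfl
  exact hq.1 a h

lemma asymm (hq : IsTournament q) {a b : W} (h : q a b) : ¬ q b a :=
  (hq.2 a b (hq.ne_of_rel h)).mp h

lemma rel_of_not_rel (hq : IsTournament q) {a b : W} (hab : a ≠ b) (h : ¬ q a b) : q b a :=
  not_not.mp (mt (hq.2 a b hab).mpr h)

lemma comap (hq : IsTournament q) {U : Type*} {f : U → W} (hf : Function.Injective f) :
    IsTournament fun a b => q (f a) (f b) :=
  ⟨fun a => hq.1 (f a), fun a b hab => hq.2 (f a) (f b) (hf.ne hab)⟩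

end IsTournament

lemma StronglyConnected.forall_of_closed (hs : StronglyConnected q) {P : W → Prop}
    (hP : ∀ a b, P a → q a b → P b) {u : W} (hu : P u) (v : W) : P v := by
  induction hs u v with
  | refl => exact hu
  | tail _ hbc ih => exact hP _ _ ih hbc

lemma isDipath_iff {u v : W} {p : List W} :
    IsDipath q u v p ↔ p.IsChain q ∧ p.Nodup ∧ p.head? = some u ∧ p.getLast? = some v :=
  Iff.rfl

lemma IsDipath.map {U : Type*} {r : U → U → Prop} {f : W → U} (hf : Function.Injective f)
    (hqr : ∀ a b, q a b → r (f a) (f b)) {u v : W} {p : List W} (hp : IsDipath q u v p) :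
    IsDipath r (f u) (f v) (p.map f) := by
  obtain ⟨hc, hn, hu, hv⟩ := isDipath_iff.mp hp
  exact ⟨isChain_map_of_isChain f hqr hc, hn.map hf, by simp [hu], by simp [hv]⟩

lemma IsDipath.start_mem {u v : W} {p : List W} (hp : IsDipath q u v p) : u ∈ p :=
  mem_of_mem_head? hp.2.2.1

lemma IsDipath.end_mem {u v : W} {p : List W} (hp : IsDipath q u v p) : v ∈ p :=
  mem_of_getLast? hp.2.2.2

/-- The directed cycle `a → l₀ → ⋯ → lₙ → a`. -/
def IsDicycle (q : W → W → Prop) (a : W) (l : List W) : Prop :=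
  (a :: (l ++ [a])).IsChain q ∧ (a :: l).Nodup

lemma IsDicycle.rotate {a w : W} {l₁ l₂ : List W} (hC : IsDicycle q a (l₁ ++ w :: l₂)) :
    IsDicycle q w (l₂ ++ a :: l₁) := by
  have hperm : (w :: (l₂ ++ a :: l₁)).Perm (a :: (l₁ ++ w :: l₂)) := by
    simpa only [cons_append] using perm_append_comm (l₁ := w :: l₂) (l₂ := a :: l₁)
  obtain ⟨hchain, hnd⟩ := hC
  rw [append_assoc, cons_append, isChain_cons_split] at hchain
  refine ⟨?_, hperm.nodup_iff.mpr hnd⟩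
  rw [append_assoc, cons_append, isChain_cons_split]
  exact hchain.symm

lemma IsDicycle.exists_rotate {a w : W} {l : List W} (hC : IsDicycle q a l) (hw : w ∈ a :: l) :
    ∃ l', IsDicycle q w l' ∧ (w :: l').Perm (a :: l) := by
  rcases mem_cons.mp hw with rfl | hw
  · exact ⟨l, hC, Perm.refl _⟩
  · obtain ⟨l₁, l₂, rfl⟩ := append_of_mem hw
    exact ⟨_, hC.rotate, by simpa using perm_append_comm (l₁ := w :: l₂) (l₂ := a :: l₁)⟩

lemma IsTournament.exists_insert_between (hq : IsTournament q) {e v : W} :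
    ∀ {c : W} {p : List W}, (c :: (p ++ [e])).IsChain q → q c v → q v e → v ∉ p →
      ∃ p₁ p₂, p = p₁ ++ p₂ ∧ (c :: (p₁ ++ v :: p₂ ++ [e])).IsChain q
  | c, [], _, hcv, hve, _ => ⟨[], [], rfl, by simp [hcv, hve]⟩
  | c, d :: p, hp, hcv, hve, hv => by
    rw [cons_append, isChain_cons_cons] at hp
    by_cases hvd : q v d
    · exact ⟨[], d :: p, rfl, by simpa [hcv, hvd] using hp.2⟩
    · have hdv := hq.rel_of_not_rel (by rintro rfl; exact hv mem_cons_self) hvd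
      obtain ⟨p₁, p₂, rfl, hch⟩ :=
        hq.exists_insert_between hp.2 hdv hve (fun h => hv (mem_cons_of_mem d h))
      exact ⟨d :: p₁, p₂, rfl, by simpa [hp.1] using hch⟩

lemma IsDicycle.exists_insert (hq : IsTournament q) {a v c d : W} {l : List W}
    (hC : IsDicycle q a l) (hv : v ∉ a :: l) (hc : c ∈ a :: l) (hcv : q c v)
    (hd : d ∈ a :: l) (hvd : q v d) :
    ∃ a' l', IsDicycle q a' l' ∧ l.length < l'.length := by
  obtain ⟨l', ⟨hchain, hnd⟩, hperm⟩ := hC.exists_rotate hd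
  have hcl' : c ∈ l' := by
    rcases mem_cons.mp (hperm.mem_iff.mpr hc) with rfl | h
    · exact absurd hvd (hq.asymm hcv)
    · exact h
  obtain ⟨l₁, l₂, rfl⟩ := append_of_mem hcl'
  rw [append_assoc, cons_append, isChain_cons_split] at hchain
  obtain ⟨p₁, p₂, rfl, hins⟩ := hq.exists_insert_between hchain.2 hcv hvd
    (fun h => hv (hperm.mem_iff.mp (by simp [h])))
  refine ⟨d, l₁ ++ c :: (p₁ ++ v :: p₂), ⟨?_, ?_⟩, ?_⟩
  · rw [append_assoc, cons_append, isChain_cons_split]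
    exact ⟨hchain.1, by simpa using hins⟩
  · have hsplit : d :: (l₁ ++ c :: (p₁ ++ v :: p₂)) = (d :: l₁ ++ c :: p₁) ++ v :: p₂ := by simp
    rw [hsplit, nodup_middle]
    refine nodup_cons.mpr ⟨fun h => hv (hperm.mem_iff.mp (by simpa using h)), by simpa using hnd⟩
  · have := hperm.length_eq
    simp only [length_cons, length_append] at this ⊢
    omega

lemma IsDicycle.append_pair (hq : IsTournament q) {a b b' : W} {l : List W}
    (hC : IsDicycle q a l) (hb : b ∉ a :: l) (hb' : b' ∉ a :: l) (hCb : ∀ c ∈ a :: l, q c b)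
    (hb'C : ∀ c ∈ a :: l, q b' c) (hbb' : q b b') : IsDicycle q a (l ++ [b, b']) := by
  obtain ⟨hchain, hnd⟩ := hC
  refine ⟨?_, ?_⟩
  · have hl : (a :: l).IsChain q := by
      simpa using hchain.left_of_append (l₁ := a :: l) (l₂ := [a])
    simpa using hl.append (l₂ := [b, b', a]) (by simp [hbb', hb'C a mem_cons_self])
      (fun c hc _ hb => (Option.mem_some_iff.mp hb) ▸ hCb c (mem_of_getLast? hc))
  · rw [← cons_append]
    refine hnd.append (by simp [hq.ne_of_rel hbb']) ?_
    simp [hb, hb']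

lemma IsTournament.exists_rel_of_forall_dominated_or_dominates (hq : IsTournament q)
    (hs : StronglyConnected q) {X : Set W} {x z : W} (hx : x ∈ X) (hz : z ∉ X)
    (hsplit : ∀ w ∉ X, (∀ c ∈ X, q c w) ∨ ∀ c ∈ X, q w c) :
    ∃ a b, (∀ c ∈ X, q c a) ∧ (∀ c ∈ X, q b c) ∧ q a b := by
  by_contra! h
  by_cases hdom : ∃ b, ∀ c ∈ X, q c b
  · have hclosed : ∀ w u, (∀ c ∈ X, q c w) → q w u → ∀ c ∈ X, q c u := by
      intro w u hXw hwu
      have hu : u ∉ X := fun hu => hq.asymm (hXw u hu) hwu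
      exact (hsplit u hu).resolve_right fun huX => h w u hXw huX hwu
    obtain ⟨b, hb⟩ := hdom
    exact hq.1 x (hs.forall_of_closed hclosed hb x x hx)
  · push Not at hdom
    have hclosed : ∀ w u, w ∈ X → q w u → u ∈ X := by
      intro w u hw hwu
      by_contra hu
      obtain ⟨c, hc, hcu⟩ := hdom u
      exact hq.asymm hwu (((hsplit u hu).resolve_left fun h => hcu (h c hc)) w hw)
    exact hz (hs.forall_of_closed hclosed hx z)

lemma IsDicycle.exists_longer (hq : IsTournament q) (hs : StronglyConnected q) {a v : W}
    {l : List W} (hC : IsDicycle q a l) (hv : v ∉ a :: l) :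
    ∃ a' l', IsDicycle q a' l' ∧ l.length < l'.length := by
  by_cases hmix : ∃ w ∉ a :: l, (∃ c ∈ a :: l, q c w) ∧ ∃ d ∈ a :: l, q w d
  · obtain ⟨w, hw, ⟨c, hc, hcw⟩, d, hd, hwd⟩ := hmix
    exact hC.exists_insert hq hw hc hcw hd hwd
  push Not at hmix
  have hsplit : ∀ w ∉ a :: l, (∀ c ∈ a :: l, q c w) ∨ ∀ c ∈ a :: l, q w c := by
    intro w hw
    by_cases hin : ∃ c ∈ a :: l, q c w
    · exact .inl fun d hd =>
        hq.rel_of_not_rel (by rintro rfl; exact hw hd) (hmix w hw hin d hd)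
    · push Not at hin
      exact .inr fun c hc => hq.rel_of_not_rel (by rintro rfl; exact hw hc) (hin c hc)
  obtain ⟨b, b', hCb, hb'C, hbb'⟩ := hq.exists_rel_of_forall_dominated_or_dominates hs
    (X := {w | w ∈ a :: l}) mem_cons_self hv hsplit
  refine ⟨a, l ++ [b, b'], hC.append_pair hq ?_ ?_ hCb hb'C hbb', by simp⟩
  · exact fun hb => hq.1 b (hCb b hb)
  · exact fun hb' => hq.1 b' (hb'C b' hb')

lemma IsTournament.exists_isDicycle [Nontrivial W] (hq : IsTournament q)
    (hs : StronglyConnected q) : ∃ a l, IsDicycle q a l := by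
  obtain ⟨x, y, hxy⟩ := exists_pair_ne W
  obtain ⟨u, v, huv⟩ : ∃ u v, q u v := by
    by_cases h : q x y
    · exact ⟨x, y, h⟩
    · exact ⟨y, x, hq.rel_of_not_rel hxy h⟩
  -- Along a walk from `v` back to `u`, the first vertex not dominated by `u` closes a triangle.
  have hclosed : ∀ w w', ((∃ a l, IsDicycle q a l) ∨ q u w) → q w w' →
      (∃ a l, IsDicycle q a l) ∨ q u w' := by
    rintro w w' (hC | huw) hww'
    · exact .inl hC
    by_cases huw' : q u w'
    · exact .inr huw'
    have hw'u : w' ≠ u := by rintro rfl; exact hq.asymm huw hww'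
    have hw'u := hq.rel_of_not_rel hw'u.symm huw'
    refine .inl ⟨u, [w, w'], by simp [huw, hww', hw'u], ?_⟩
    simp [hq.ne_of_rel huw, hq.ne_of_rel hww', (hq.ne_of_rel hw'u).symm]
  exact (hs.forall_of_closed hclosed (.inr huv) u).resolve_right (hq.1 u)

/-- Camion's theorem. -/
theorem IsTournament.exists_isDicycle_forall_mem [Finite W] [Nontrivial W]
    (hq : IsTournament q) (hs : StronglyConnected q) :
    ∃ a l, IsDicycle q a l ∧ ∀ w, w ∈ a :: l := by
  have := Fintype.ofFinite W
  by_contra! h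
  have hlong : ∀ n, ∃ a l, IsDicycle q a l ∧ n ≤ l.length := by
    intro n
    induction n with
    | zero =>
      obtain ⟨a, l, hC⟩ := hq.exists_isDicycle hs
      exact ⟨a, l, hC, l.length.zero_le⟩
    | succ n ih =>
      obtain ⟨a, l, hC, hn⟩ := ih
      obtain ⟨v, hv⟩ := h a l hC
      obtain ⟨a', l', hC', hlen⟩ := hC.exists_longer hq hs hv
      exact ⟨a', l', hC', by omega⟩
  obtain ⟨a, l, hC, hlen⟩ := hlong (Fintype.card W)
  have := hC.2.length_le_card
  simp only [length_cons] at this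
  omega

lemma IsDicycle.isDipath_take {a b : W} {l₁ l₂ : List W} (hC : IsDicycle q a (l₁ ++ b :: l₂)) :
    IsDipath q a b (a :: (l₁ ++ [b])) := by
  obtain ⟨hchain, hnd⟩ := hC
  rw [append_assoc, cons_append, isChain_cons_split] at hchain
  refine isDipath_iff.mpr ⟨hchain.1, hnd.sublist ?_, rfl, ?_⟩
  · simp
  · rw [← cons_append, getLast?_concat]

theorem IsTournament.exists_dipaths_forall_mem [Finite W] (hq : IsTournament q)
    (hs : StronglyConnected q) {x y : W} (hxy : x ≠ y) :
    ∃ p₁ p₂, IsDipath q x y p₁ ∧ IsDipath q y x p₂ ∧ (∀ w ∈ p₁, w ∈ p₂ → w = x ∨ w = y) ∧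
      ∀ w, w ∈ p₁ ∨ w ∈ p₂ := by
  have : Nontrivial W := ⟨x, y, hxy⟩
  obtain ⟨a, l, hC, hall⟩ := hq.exists_isDicycle_forall_mem hs
  obtain ⟨l', hC', hperm⟩ := hC.exists_rotate (hall x)
  have hall' : ∀ w, w ∈ x :: l' := fun w => hperm.mem_iff.mpr (hall w)
  obtain ⟨l₁, l₂, rfl⟩ := append_of_mem ((mem_cons.mp (hall' y)).resolve_left hxy.symm)
  refine ⟨_, _, hC'.isDipath_take, hC'.rotate.isDipath_take, ?_, fun w => ?_⟩
  · have hdisj := (nodup_append.mp (nodup_cons.mp hC'.2).2).2.2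
    intro w hw₁ hw₂
    simp only [mem_cons, mem_append] at hw₁ hw₂
    grind
  · simp only [mem_cons, mem_append] at hall' ⊢
    grind

theorem IsTournament.exists_short_dipath (hq : IsTournament q) (hs : StronglyConnected q)
    {x y z : W} (hxy : x ≠ y) (hzx : z ≠ x) (hzy : z ≠ y) :
    ∃ p, (IsDipath q x y p ∨ IsDipath q y x p) ∧ (∃ w ∈ p, w ≠ x ∧ w ≠ y) ∧ p.length ≤ 4 := by
  by_cases h₁ : ∃ v, v ≠ x ∧ v ≠ y ∧ (q x v ∧ q v y ∨ q y v ∧ q v x)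
  · obtain ⟨v, hvx, hvy, ⟨hxv, hvy'⟩ | ⟨hyv, hvx'⟩⟩ := h₁
    · refine ⟨[x, v, y], .inl ?_, ⟨v, by simp, hvx, hvy⟩, by simp⟩
      simp [isDipath_iff, hxv, hvy', hxy, hvx.symm, hvy]
    · refine ⟨[y, v, x], .inr ?_, ⟨v, by simp, hvx, hvy⟩, by simp⟩
      simp [isDipath_iff, hyv, hvx', hxy.symm, hvx, hvy.symm]
  push Not at h₁
  have hsplit : ∀ w ∉ ({x, y} : Set W), (∀ c ∈ ({x, y} : Set W), q c w) ∨
      ∀ c ∈ ({x, y} : Set W), q w c := by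
    intro v hv
    simp only [Set.mem_insert_iff, Set.mem_singleton_iff, not_or] at hv
    have hx := fun h => hq.rel_of_not_rel hv.1 h
    have hy := fun h => hq.rel_of_not_rel hv.2 h
    have := h₁ v hv.1 hv.2
    simp only [Set.mem_insert_iff, Set.mem_singleton_iff, forall_eq_or_imp, forall_eq]
    by_cases hxv : q x v <;> by_cases hyv : q y v <;> tauto
  obtain ⟨a, b, hXa, hbX, hab⟩ := hq.exists_rel_of_forall_dominated_or_dominates hs
    (X := {x, y}) (x := x) (by simp) (z := z) (by simp [hzx, hzy]) hsplit
  simp only [Set.mem_insert_iff, Set.mem_singleton_iff, forall_eq_or_imp, forall_eq] at hXa hbX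
  refine ⟨[x, a, b, y], .inl ?_, ⟨a, by simp, (hq.ne_of_rel hXa.1).symm,
    (hq.ne_of_rel hXa.2).symm⟩, by simp⟩
  simp [isDipath_iff, hXa.1, hab, hbX.2, hxy, hq.ne_of_rel hXa.1, hq.ne_of_rel hab,
    (hq.ne_of_rel hXa.2).symm, (hq.ne_of_rel hbX.1).symm, hq.ne_of_rel hbX.2]

end Tournament

section Linkage

variable {r : V → V → Prop} {x y : V}

def PathsIndependent (x y : V) (p p' : List V) : Prop :=
  p ≠ p' ∧ ∀ w ∈ p, w ∈ p' → w = x ∨ w = y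

lemma PathsIndependent.symm {p p' : List V} (h : PathsIndependent x y p p') :
    PathsIndependent x y p' p :=
  ⟨h.1.symm, fun w hw hw' => h.2 w hw' hw⟩

instance : Std.Symm (PathsIndependent x y) := ⟨fun _ _ => PathsIndependent.symm⟩

def IsWeakLinkage (r : V → V → Prop) (x y : V) (ps : List (List V)) : Prop :=
  (∀ p ∈ ps, IsDipath r x y p ∨ IsDipath r y x p) ∧ ps.Pairwise (PathsIndependent x y)

def innerVertices (x y : V) (ps : List (List V)) : Set V :=
  {w | w ≠ x ∧ w ≠ y ∧ ∃ p ∈ ps, w ∈ p}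

lemma IsWeakLinkage.cons {p : List V} {ps : List (List V)} (h : IsWeakLinkage r x y ps)
    (hp : IsDipath r x y p ∨ IsDipath r y x p) (hind : ∀ p' ∈ ps, PathsIndependent x y p p') :
    IsWeakLinkage r x y (p :: ps) :=
  ⟨forall_mem_cons.mpr ⟨hp, h.1⟩, pairwise_cons.mpr ⟨hind, h.2⟩⟩

lemma pathsIndependent_of_forall_notMem_innerVertices {p p' : List V} {ps : List (List V)}
    (hp : ∀ w ∈ p, w ∉ innerVertices x y ps) (hp' : p' ∈ ps) (hinner : ∃ w ∈ p', w ≠ x ∧ w ≠ y) :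
    PathsIndependent x y p p' := by
  refine ⟨?_, fun w hw hw' => ?_⟩
  · rintro rfl
    obtain ⟨w, hw, hwx, hwy⟩ := hinner
    exact hp w hw ⟨hwx, hwy, p, hp', hw⟩
  · by_contra! h
    exact hp w hw ⟨h.1, h.2, p', hp', hw'⟩

lemma IsWeakLinkage.weakStarContainer {ps : List (List V)} (h : IsWeakLinkage r x y ps)
    (hcover : ∀ w, ∃ p ∈ ps, w ∈ p) : WeakStarContainer r x y ps.length := by
  have hnd : ps.Nodup := h.2.imp fun hind => hind.1
  refine ⟨ps.get, nodup_iff_injective_get.mp hnd, fun i => h.1 _ (get_mem ps i), ?_, fun w => ?_⟩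
  · intro i j hij
    exact (h.2.forall (get_mem ps i) (get_mem ps j) ((nodup_iff_injective_get.mp hnd).ne hij)).2
  · obtain ⟨p, hp, hw⟩ := hcover w
    obtain ⟨i, rfl⟩ := get_of_mem hp
    exact ⟨i, hw⟩

lemma ncard_innerVertices_cons_le [Finite V] {p : List V} {ps : List (List V)}
    (hp : IsDipath r x y p ∨ IsDipath r y x p) (hxy : x ≠ y) :
    (innerVertices x y (p :: ps)).ncard ≤ p.length - 2 + (innerVertices x y ps).ncard := by
  classical
  have hxy_mem : {x, y} ⊆ {w | w ∈ p} := by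
    rcases hp with hp | hp <;> simp [Set.insert_subset_iff, hp.start_mem, hp.end_mem]
  have hsub : innerVertices x y (p :: ps) ⊆ ({w | w ∈ p} \ {x, y}) ∪ innerVertices x y ps := by
    rintro w ⟨hwx, hwy, p', hp', hw⟩
    rcases mem_cons.mp hp' with rfl | hp'
    · exact .inl ⟨hw, by simp [hwx, hwy]⟩
    · exact .inr ⟨hwx, hwy, p', hp', hw⟩
  have hp_card : ({w | w ∈ p} \ {x, y}).ncard ≤ p.length - 2 := by
    rw [Set.ncard_sdiff hxy_mem, Set.ncard_pair hxy]
    have : {w | w ∈ p}.ncard ≤ p.length := by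
      simpa [← Set.ncard_coe_finset] using p.toFinset_card_le
    omega
  calc _ ≤ _ := Set.ncard_le_ncard hsub
    _ ≤ _ := Set.ncard_union_le _ _
    _ ≤ _ := by omega

lemma KStrong.stronglyConnected_subtype [Fintype V] {k : ℕ} (h : KStrong r k) {S : Set V}
    (hS : S.ncard < k) : StronglyConnected fun a b : {w // w ∉ S} => r a b := by
  rintro ⟨u, hu⟩ ⟨v, hv⟩
  induction h.2 S hS u v hu hv with
  | refl => exact .refl
  | tail _ hbc ih => exact (ih hbc.1).tail (b := ⟨_, hbc.1⟩) hbc.2.2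

lemma exists_notMem_ne_ne [Finite V] {S : Set V} (h : S.ncard + 2 < Nat.card V) :
    ∃ z ∉ S, z ≠ x ∧ z ≠ y := by
  by_contra! hall
  have hsub : Set.univ ⊆ S ∪ {x, y} := fun z _ => by
    by_cases hz : z ∈ S
    · exact .inl hz
    · by_cases hzx : z = x
      · simp [hzx]
      · simp [hall z hz hzx]
  have hpair : ({x, y} : Set V).ncard ≤ 2 := (Set.ncard_insert_le x {y}).trans (by simp)
  have := calc Nat.card V = (Set.univ : Set V).ncard := (Set.ncard_univ V).symm
    _ ≤ (S ∪ {x, y}).ncard := Set.ncard_le_ncard hsub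
    _ ≤ S.ncard + ({x, y} : Set V).ncard := Set.ncard_union_le _ _
  omega

lemma IsDipath.map_val {S : Set V} {u v : {w // w ∉ S}} {p : List {w // w ∉ S}}
    (hp : IsDipath (fun a b : {w // w ∉ S} => r a b) u v p) : IsDipath r u v (p.map Subtype.val) :=
  hp.map Subtype.val_injective fun _ _ h => h

lemma forall_mem_map_val_notMem {S : Set V} {p : List {w // w ∉ S}} :
    ∀ w ∈ p.map Subtype.val, w ∉ S := by
  simp only [mem_map]
  rintro _ ⟨w, -, rfl⟩
  exact w.2

lemma exists_short_dipath_of_stronglyConnected_subtype (hT : IsTournament r) {S : Set V}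
    (hs : StronglyConnected fun a b : {w // w ∉ S} => r a b) (hx : x ∉ S) (hy : y ∉ S)
    (hxy : x ≠ y) {z : V} (hz : z ∉ S) (hzx : z ≠ x) (hzy : z ≠ y) :
    ∃ p, (IsDipath r x y p ∨ IsDipath r y x p) ∧ (∃ w ∈ p, w ≠ x ∧ w ≠ y) ∧ p.length ≤ 4 ∧
      ∀ w ∈ p, w ∉ S := by
  obtain ⟨p, hp, ⟨w, hw, hwx, hwy⟩, hlen⟩ :=
    (hT.comap Subtype.val_injective).exists_short_dipath hs (x := ⟨x, hx⟩) (y := ⟨y, hy⟩)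
      (z := ⟨z, hz⟩) (by simpa) (by simpa) (by simpa)
  refine ⟨p.map Subtype.val, hp.imp IsDipath.map_val IsDipath.map_val,
    ⟨w, mem_map_of_mem hw, fun h => hwx (Subtype.ext h), fun h => hwy (Subtype.ext h)⟩,
    by simpa using hlen, forall_mem_map_val_notMem⟩

lemma exists_dipaths_forall_notMem_of_stronglyConnected_subtype [Finite V]
    (hT : IsTournament r) {S : Set V} (hs : StronglyConnected fun a b : {w // w ∉ S} => r a b)
    (hx : x ∉ S) (hy : y ∉ S) (hxy : x ≠ y) :
    ∃ p₁ p₂, IsDipath r x y p₁ ∧ IsDipath r y x p₂ ∧ (∀ w ∈ p₁, w ∈ p₂ → w = x ∨ w = y) ∧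
      (∀ w ∉ S, w ∈ p₁ ∨ w ∈ p₂) ∧ (∀ w ∈ p₁, w ∉ S) ∧ ∀ w ∈ p₂, w ∉ S := by
  obtain ⟨p₁, p₂, h₁, h₂, hdisj, hcov⟩ :=
    (hT.comap Subtype.val_injective).exists_dipaths_forall_mem hs (x := ⟨x, hx⟩) (y := ⟨y, hy⟩)
      (by simpa)
  refine ⟨_, _, h₁.map_val, h₂.map_val, ?_, fun w hw => ?_, forall_mem_map_val_notMem,
    forall_mem_map_val_notMem⟩
  · simp only [mem_map]
    rintro _ ⟨w, hw₁, rfl⟩ ⟨w', hw₂, hww'⟩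
    cases Subtype.ext hww'
    simpa [Subtype.ext_iff] using hdisj w hw₁ hw₂
  · exact (hcov ⟨w, hw⟩).imp mem_map_of_mem mem_map_of_mem

lemma exists_isWeakLinkage_of_kStrong [Fintype V] (hT : IsTournament r) {k : ℕ}
    (hstrong : KStrong r (2 * k + 1)) (hxy : x ≠ y) :
    ∀ j ≤ k, ∃ ps, IsWeakLinkage r x y ps ∧ ps.length = j ∧
      (∀ p ∈ ps, ∃ w ∈ p, w ≠ x ∧ w ≠ y) ∧ (innerVertices x y ps).ncard ≤ 2 * j := by
  intro j hj
  induction j with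
  | zero => exact ⟨[], ⟨by simp, .nil⟩, rfl, by simp, by simp [innerVertices]⟩
  | succ j ih =>
    obtain ⟨ps, hps, hlen, hinner, hcard⟩ := ih (by omega)
    have hx : x ∉ innerVertices x y ps := fun h => h.1 rfl
    have hy : y ∉ innerVertices x y ps := fun h => h.2.1 rfl
    obtain ⟨z, hz, hzx, hzy⟩ := exists_notMem_ne_ne (S := innerVertices x y ps) (by
      have := hstrong.1
      rw [Nat.card_eq_fintype_card]
      omega)
    obtain ⟨p, hp, hpinner, hplen, hpS⟩ := exists_short_dipath_of_stronglyConnected_subtype hT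
      (hstrong.stronglyConnected_subtype (by omega)) hx hy hxy hz hzx hzy
    refine ⟨p :: ps, hps.cons hp fun p' hp' =>
        pathsIndependent_of_forall_notMem_innerVertices hpS hp' (hinner p' hp'),
      by simp [hlen], forall_mem_cons.mpr ⟨hpinner, hinner⟩, ?_⟩
    have := ncard_innerVertices_cons_le (ps := ps) hp hxy
    omega

lemma IsWeakLinkage.weakStarContainer_length_add_two [Finite V] (hT : IsTournament r)
    {ps : List (List V)} (hps : IsWeakLinkage r x y ps) (hinner : ∀ p ∈ ps, ∃ w ∈ p, w ≠ x ∧ w ≠ y)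
    (hxy : x ≠ y) (hs : StronglyConnected fun a b : {w // w ∉ innerVertices x y ps} => r a b) :
    WeakStarContainer r x y (ps.length + 2) := by
  obtain ⟨p₁, p₂, h₁, h₂, hdisj, hcov, hp₁S, hp₂S⟩ :=
    exists_dipaths_forall_notMem_of_stronglyConnected_subtype hT hs (fun h => h.1 rfl)
      (fun h => h.2.1 rfl) hxy
  have hp₁₂ : p₁ ≠ p₂ := by
    rintro rfl
    exact hxy (Option.some_injective _ (h₁.2.2.1.symm.trans h₂.2.2.1))
  have hps₂ := hps.cons (.inr h₂) fun p' hp' =>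
    pathsIndependent_of_forall_notMem_innerVertices hp₂S hp' (hinner p' hp')
  have hps₁₂ := hps₂.cons (.inl h₁) <| forall_mem_cons.mpr ⟨⟨hp₁₂, hdisj⟩, fun p' hp' =>
    pathsIndependent_of_forall_notMem_innerVertices hp₁S hp' (hinner p' hp')⟩
  refine hps₁₂.weakStarContainer fun w => ?_
  by_cases hw : w ∈ innerVertices x y ps
  · obtain ⟨-, -, p, hp, hwp⟩ := hw
    exact ⟨p, mem_cons_of_mem _ (mem_cons_of_mem _ hp), hwp⟩
  · rcases hcov w hw with h | h
    · exact ⟨p₁, mem_cons_self, h⟩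
    · exact ⟨p₂, mem_cons_of_mem _ mem_cons_self, h⟩

end Linkage

/-- For every `k ≥ 0`, every `(2k+1)`-strong tournament is
`(k+2)*`-weakly connected. -/
theorem stmt6 [Fintype V] (r : V → V → Prop) (hT : IsTournament r)
    (k : ℕ) (hstrong : KStrong r (2 * k + 1)) (x y : V) (hxy : x ≠ y) :
    WeakStarContainer r x y (k + 2) := by
  obtain ⟨ps, hps, rfl, hinner, hcard⟩ := exists_isWeakLinkage_of_kStrong hT hstrong hxy k le_rfl
  exact hps.weakStarContainer_length_add_two hT hinner hxy
    (hstrong.stronglyConnected_subtype (by omega))
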